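/- If play(α₁) = play(α₂) and ev(σ·α₁) = [σ'·α₁], then ev(σ·α₂) = [σ'·α₂]. -/

import Mathlib

structure Comm (P L : Type) where
  sender : P
  receiver : P
  label : L

def play {P L : Type} (α : Comm P L) : Set P := {α.sender, α.receiver}

abbrev Trace (P L : Type) := List (Comm P L)

def playT {P L : Type} : Trace P L → Set P
  | [] => ∅
  | α :: σ => play α ∪ playT σ

/-- Permutation equivalence: least equivalence relation swapping adjacent
communications with disjoint participant sets. -/
inductive PermEq {P L : Type} : Trace P L → Trace P L → Prop
  | swap (σ σ' : Trace P L) (α α' : Comm P L) (h : play α ∩ play α' = ∅) :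
      PermEq (σ ++ α :: α' :: σ') (σ ++ α' :: α :: σ')
  | refl (σ : Trace P L) : PermEq σ σ
  | symm {σ σ' : Trace P L} : PermEq σ σ' → PermEq σ' σ
  | trans {σ σ' σ'' : Trace P L} : PermEq σ σ' → PermEq σ' σ'' → PermEq σ σ''

/-- A non-empty trace is pointed if every communication except the last shares
a participant with some later communication in the trace. -/
def IsPointed {P L : Type} (σ : Trace P L) : Prop :=
  σ ≠ [] ∧ ∀ i (hi : i + 1 < σ.length),
    ∃ j, i < j ∧ ∃ hj : j < σ.length,
      (play (σ.get ⟨i, by omega⟩) ∩ play (σ.get ⟨j, hj⟩)).Nonempty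

instance permSetoid (P L : Type) : Setoid (Trace P L) :=
  ⟨PermEq, ⟨PermEq.refl, PermEq.symm, PermEq.trans⟩⟩

/-- G-events live in the quotient of traces by permutation equivalence. -/
abbrev GEvent (P L : Type) := Quotient (permSetoid P L)

/-- A g-event proper is the class of a pointed trace. -/
def IsGEvent {P L : Type} (γ : GEvent P L) : Prop :=
  ∃ σ : Trace P L, IsPointed σ ∧ γ = ⟦σ⟧

open Classical in
/-- Causal prefixing on traces: prepend `α` iff its participants meet those of `σ`. -/
noncomputable def cpre {P L : Type} (α : Comm P L) (σ : Trace P L) : Trace P L :=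
  if (play α ∩ playT σ).Nonempty then α :: σ else σ

/-- `evFull σ` is (a canonical representative of) the g-event generated by `σ`. -/
noncomputable def evFull {P L : Type} : Trace P L → Trace P L
  | [] => []
  | [α] => [α]
  | α :: β :: σ => cpre α (evFull (β :: σ))

lemma playT_append {P L : Type} (σ τ : Trace P L) :
    playT (σ ++ τ) = playT σ ∪ playT τ := by
  induction σ with
  | nil => simp [playT]
  | cons α σ ih => simp [playT, ih, Set.union_assoc]

lemma PermEq.playT_eq {P L : Type} {σ σ' : Trace P L} (h : PermEq σ σ') :
    playT σ = playT σ' := by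
  induction h with
  | swap σ σ' α α' h =>
      simp [playT_append, playT, Set.union_left_comm, Set.union_comm, Set.union_assoc]
  | refl => rfl
  | symm _ ih => exact ih.symm
  | trans _ _ ih1 ih2 => exact ih1.trans ih2

lemma PermEq.cons {P L : Type} {σ σ' : Trace P L} (α : Comm P L) (h : PermEq σ σ') :
    PermEq (α :: σ) (α :: σ') := by
  induction h with
  | swap τ τ' β β' hd => exact PermEq.swap (α :: τ) τ' β β' hd
  | refl => exact PermEq.refl _
  | symm _ ih => exact ih.symm
  | trans _ _ ih1 ih2 => exact ih1.trans ih2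

/-- Causal prefixing of a g-event by a communication. -/
noncomputable def cprefix {P L : Type} (α : Comm P L) : GEvent P L → GEvent P L :=
  Quotient.map (cpre α) (by
    intro σ σ' h
    by_cases hc : (play α ∩ playT σ').Nonempty
    · simpa [cpre, h.playT_eq, hc] using (show (α :: σ) ≈ (α :: σ') from PermEq.cons α h)
    · simpa [cpre, h.playT_eq, hc] using h)

/-- Causal prefixing of a g-event by a trace. -/
noncomputable def cprefixT {P L : Type} : Trace P L → GEvent P L → GEvent P L
  | [], γ => γ
  | α :: σ, γ => cprefix α (cprefixT σ γ)

/-- Causality on g-events. -/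
def GCause {P L : Type} (γ γ' : GEvent P L) : Prop :=
  ∃ σ σ' : Trace P L, γ = ⟦σ⟧ ∧ γ' = ⟦σ ++ σ'⟧

/-- Conflict on g-events. -/
def GConflict {P L : Type} (γ γ' : GEvent P L) : Prop :=
  ∃ (σ σ₁ σ₂ : Trace P L) (p q : P) (l₁ l₂ : L), l₁ ≠ l₂ ∧
    γ = ⟦σ ++ ⟨p, q, l₁⟩ :: σ₁⟧ ∧ γ' = ⟦σ ++ ⟨p, q, l₂⟩ :: σ₂⟧

/-!
The causal prefixing that builds `ev(σ·α)` consults `α` only through `play α`, so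
`ev(σ·α₁)` and `ev(σ·α₂)` are `π·α₁` and `π·α₂` for one and the same trace `π`. To move the
equivalence `π·α₁ ~ σ'·α₁` over to `α₂`, replace the last occurrence of `α₁` by `α₂` on both
sides: since `α₁` and `α₂` have the same participants, this turns every swap into a swap.
-/

open Classical in
noncomputable def causalPast {P L : Type} (S : Set P) : Trace P L → Trace P L
  | [] => []
  | β :: σ =>
      if (play β ∩ (playT (causalPast S σ) ∪ S)).Nonempty then β :: causalPast S σ
      else causalPast S σ

lemma evFull_cons_of_ne_nil {P L : Type} (β : Comm P L) {σ : Trace P L} (hσ : σ ≠ []) :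
    evFull (β :: σ) = cpre β (evFull σ) := by
  obtain ⟨γ, τ, rfl⟩ := List.exists_cons_of_ne_nil hσ
  rfl

lemma evFull_append_singleton {P L : Type} (σ : Trace P L) (α : Comm P L) :
    evFull (σ ++ [α]) = causalPast (play α) σ ++ [α] := by
  induction σ with
  | nil => rfl
  | cons β σ ih =>
      rw [List.cons_append, evFull_cons_of_ne_nil β (by simp), ih, cpre, causalPast,
        playT_append, playT, playT, Set.union_empty]
      split_ifs <;> rfl

lemma PermEq.replace {P L : Type} [DecidableEq (Comm P L)] {σ τ : Trace P L}
    {α₁ α₂ : Comm P L} (hplay : play α₁ = play α₂) (h : PermEq σ τ) :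
    PermEq (σ.replace α₁ α₂) (τ.replace α₁ α₂) := by
  induction h with
  | swap ρ ρ' β β' hd =>
      by_cases hρ : α₁ ∈ ρ
      · simp only [List.replace_append_left hρ]
        exact PermEq.swap _ ρ' β β' hd
      simp only [List.replace_append_right hρ, List.replace_cons]
      by_cases h : α₁ = β <;> by_cases h' : α₁ = β'
      · subst h h'; exact PermEq.refl _
      · subst h; simpa [beq_false_of_ne h'] using PermEq.swap ρ ρ' α₂ β' (hplay ▸ hd)
      · subst h'; simpa [beq_false_of_ne h] using PermEq.swap ρ ρ' β α₂ (hplay ▸ hd)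
      · simpa [beq_false_of_ne h, beq_false_of_ne h'] using PermEq.swap ρ _ β β' hd
  | refl => exact PermEq.refl _
  | symm _ ih => exact ih.symm
  | trans _ _ ih₁ ih₂ => exact ih₁.trans ih₂

lemma PermEq.reverse {P L : Type} {σ τ : Trace P L} (h : PermEq σ τ) :
    PermEq σ.reverse τ.reverse := by
  induction h with
  | swap ρ ρ' β β' hd =>
      simpa using PermEq.swap ρ'.reverse ρ.reverse β' β (Set.inter_comm _ _ ▸ hd)
  | refl => exact PermEq.refl _
  | symm _ ih => exact ih.symm
  | trans _ _ ih₁ ih₂ => exact ih₁.trans ih₂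

-- Reversal moves the last communication to the front, where `List.replace` acts.
lemma PermEq.relabel_last {P L : Type} {σ τ : Trace P L} {α₁ α₂ : Comm P L}
    (hplay : play α₁ = play α₂) (h : PermEq (σ ++ [α₁]) (τ ++ [α₁])) :
    PermEq (σ ++ [α₂]) (τ ++ [α₂]) := by
  classical
  simpa using (h.reverse.replace hplay).reverse

/-- if play(α₁) = play(α₂) and ev(σ·α₁) = [σ'·α₁],
then ev(σ·α₂) = [σ'·α₂]. -/
theorem sibling_events {P L : Type} (σ σ' : Trace P L) (α₁ α₂ : Comm P L)
    (hplay : play α₁ = play α₂)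
    (h : (⟦evFull (σ ++ [α₁])⟧ : GEvent P L) = ⟦σ' ++ [α₁]⟧) :
    (⟦evFull (σ ++ [α₂])⟧ : GEvent P L) = ⟦σ' ++ [α₂]⟧ := by
  rw [evFull_append_singleton] at h ⊢
  rw [← hplay]
  exact Quotient.sound ((Quotient.exact h).relabel_last hplay)
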